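/- Let c₁ and c₂ be configurations of a graph G with c₁(v) ≥ c₂(v) for every vertex v. If c₁ is not volatile, then c₂ is not volatile. -/
import Mathlib


variable {V : Type*} [Fintype V] [DecidableEq V]

/-- Firing vertex `v`: remove `deg v` chips from `v`, add one chip to each neighbour. -/
def fire (G : SimpleGraph V) [DecidableRel G.Adj] (c : V → ℕ) (v : V) : V → ℕ :=
  fun u => if u = v then c v - G.degree v else c u + (if G.Adj v u then 1 else 0)

/-- Configuration after firing `f 0, f 1, …, f (m-1)` in order. -/
def fireIter (G : SimpleGraph V) [DecidableRel G.Adj] (c : V → ℕ) (f : ℕ → V) : ℕ → V → ℕ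
  | 0 => c
  | m + 1 => fire G (fireIter G c f m) (f m)

/-- A configuration is volatile if it admits an infinite legal firing sequence. -/
def Volatile (G : SimpleGraph V) [DecidableRel G.Adj] (c : V → ℕ) : Prop :=
  ∃ f : ℕ → V, ∀ m : ℕ, G.degree (f m) ≤ fireIter G c f m (f m)

/-- Configuration after firing a finite list of vertices in order. -/
def fireList (G : SimpleGraph V) [DecidableRel G.Adj] : (V → ℕ) → List V → (V → ℕ)
  | c, [] => c
  | c, v :: l => fireList G (fire G c v) l

/-- A finite firing list is legal if each vertex has at least its degree in chips when fired. -/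
def LegalList (G : SimpleGraph V) [DecidableRel G.Adj] : (V → ℕ) → List V → Prop
  | _, [] => True
  | c, v :: l => G.degree v ≤ c v ∧ LegalList G (fire G c v) l


lemma fireIter_mono (G : SimpleGraph V) [DecidableRel G.Adj] (c₁ c₂ : V → ℕ)
    (hdom : ∀ v, c₂ v ≤ c₁ v) (f : ℕ → V) (m : ℕ) :
    ∀ v, fireIter G c₂ f m v ≤ fireIter G c₁ f m v := by
  induction m with
  | zero => exact hdom
  | succ n ih =>
    intro v
    simp only [fireIter, fire]
    split
    · exact Nat.sub_le_sub_right (ih _) _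
    · exact Nat.add_le_add_right (ih _) _

/-- If `c₁` dominates `c₂` and `c₁` is not volatile, then `c₂` is not volatile. -/
theorem stmt2 (G : SimpleGraph V) [DecidableRel G.Adj] (c₁ c₂ : V → ℕ)
    (hdom : ∀ v, c₂ v ≤ c₁ v) (hnvol : ¬ Volatile G c₁) :
    ¬ Volatile G c₂ := by
  intro ⟨f, hf⟩
  exact hnvol ⟨f, fun m => (hf m).trans (fireIter_mono G c₁ c₂ hdom f m _)⟩
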